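/- Every linear isometry of n-dimensional Euclidean space fixing the origin is a product of at most n hyperplane reflections. Precisely: for every linear isometry equivalence f of EuclideanSpace ℝ (Fin n), there exist k ≤ n and unit vectors v₁, …, v_k such that f equals the composition ρ_{v₁} ∘ ρ_{v₂} ∘ ⋯ ∘ ρ_{v_k}. -/

import Mathlib

/-!
Mathlib's Cartan–Dieudonné theorem `LinearIsometryEquiv.reflections_generate_dim` writes `f` as a
product of at most `n` reflections in hyperplanes `vᗮ`. Reflecting in `0ᗮ = ⊤` is the identity and
`vᗮ` only depends on the line through `v`, so zero vectors can be dropped and the others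
normalised.
-/

open Submodule

variable {E : Type*} [NormedAddCommGroup E] [InnerProductSpace ℝ E]

theorem reflection_orthogonal_singleton_apply_of_norm_eq_one {u : E} (hu : ‖u‖ = 1) (x : E) :
    reflection (ℝ ∙ u)ᗮ x = x - (2 * inner ℝ x u) • u := by
  rw [reflection_apply, starProjection_orthogonal_val, starProjection_unit_singleton ℝ hu,
    real_inner_comm]
  module

theorem reflection_orthogonal_singleton_zero : reflection (ℝ ∙ (0 : E))ᗮ = 1 := by
  ext x
  exact reflection_mem_subspace_eq_self (by simp [span_zero_singleton])

theorem reflection_orthogonal_singleton_smul {r : ℝ} (hr : r ≠ 0) (v : E) :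
    reflection (ℝ ∙ r • v)ᗮ = reflection (ℝ ∙ v)ᗮ := by
  simp only [span_singleton_smul_eq hr.isUnit]

theorem exists_unit_vectors_prod_reflection_eq (l : List E) :
    ∃ w : List E, w.length ≤ l.length ∧ (∀ v ∈ w, ‖v‖ = 1) ∧
      (w.map fun v => reflection (ℝ ∙ v)ᗮ).prod = (l.map fun v => reflection (ℝ ∙ v)ᗮ).prod := by
  induction l with
  | nil => exact ⟨[], le_rfl, by simp, rfl⟩
  | cons a l ih =>
    obtain ⟨w, hw_length, hw_unit, hw_prod⟩ := ih
    by_cases ha : a = 0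
    · refine ⟨w, hw_length.trans l.length.le_succ, hw_unit, ?_⟩
      rw [List.map_cons, List.prod_cons, ha, reflection_orthogonal_singleton_zero, one_mul,
        hw_prod]
    · have ha_norm : ‖a‖ ≠ 0 := norm_ne_zero_iff.2 ha
      refine ⟨(‖a‖⁻¹ • a) :: w, Nat.succ_le_succ hw_length, ?_, ?_⟩
      · rintro v (_ | ⟨_, hv⟩)
        · rw [norm_smul, norm_inv, norm_norm, inv_mul_cancel₀ ha_norm]
        · exact hw_unit v hv
      · simp only [List.map_cons, List.prod_cons, hw_prod,
          reflection_orthogonal_singleton_smul (inv_ne_zero ha_norm)]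

theorem LinearIsometryEquiv.coe_list_prod (l : List (E ≃ₗᵢ[ℝ] E)) :
    ⇑l.prod = (l.map fun φ : E ≃ₗᵢ[ℝ] E => (φ : E → E)).foldr (· ∘ ·) id := by
  induction l with
  | nil => rfl
  | cons φ l ih => rw [List.prod_cons, LinearIsometryEquiv.coe_mul, ih]; rfl

/-- Every linear isometry of `n`-dimensional Euclidean space fixing the origin is a product of
at most `n` hyperplane reflections `ρ_v : x ↦ x - 2⟪x,v⟫v` for unit vectors `v`. -/
theorem every_linear_isometry_is_product_of_at_most_n_reflections (n : ℕ)
    (f : EuclideanSpace ℝ (Fin n) ≃ₗᵢ[ℝ] EuclideanSpace ℝ (Fin n)) :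
    ∃ k : ℕ, k ≤ n ∧ ∃ v : Fin k → EuclideanSpace ℝ (Fin n),
      (∀ i, ‖v i‖ = 1) ∧
      ∀ x, f x =
        (List.ofFn (fun i => fun y : EuclideanSpace ℝ (Fin n) =>
          y - (2 * (inner ℝ y (v i) : ℝ)) • v i)).foldr (· ∘ ·) id x := by
  obtain ⟨l, hl_length, rfl⟩ := f.reflections_generate_dim
  obtain ⟨w, hw_length, hw_unit, hw_prod⟩ := exists_unit_vectors_prod_reflection_eq l
  refine ⟨w.length, (hw_length.trans hl_length).trans (finrank_euclideanSpace_fin).le,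
    fun i => w[(i : ℕ)], fun i => hw_unit _ (List.getElem_mem _), fun x => ?_⟩
  rw [← hw_prod, LinearIsometryEquiv.coe_list_prod, List.map_map,
    List.ofFn_getElem_eq_map w fun v y => y - (2 * inner ℝ y v) • v]
  refine congrFun (congrArg _ (List.map_congr_left fun v hv => funext ?_)) x
  exact reflection_orthogonal_singleton_apply_of_norm_eq_one (hw_unit v hv)
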